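/- Let G be a graph with a Δ-disk representation (D_v)_{v ∈ V(G)}, and for each vertex v set d_v = √(x_v² + y_v²). If u and v are distinct non-adjacent vertices with d_u < d_v, then min(x_v, y_v) ≥ max(x_u, y_u) + r_u. -/

import Mathlib

/-- A Δ-disk representation of a simple graph `G`: each vertex `v` gets a
closed disk with center `c v = (x_v, y_v)`, `x_v > 0`, `y_v > 0`, and radius
`r v` with `max x_v y_v ≤ r v < √(x_v² + y_v²)` (the disk meets both axes but
misses the origin); distinct vertices are adjacent iff their disks intersect. -/
def IsDeltaDiskRep {V : Type*} (G : SimpleGraph V)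
    (c : V → EuclideanSpace ℝ (Fin 2)) (r : V → ℝ) : Prop :=
  (∀ v, 0 < c v 0) ∧ (∀ v, 0 < c v 1) ∧
  (∀ v, max (c v 0) (c v 1) ≤ r v) ∧ (∀ v, r v < dist (c v) 0) ∧
  ∀ u v, u ≠ v → (G.Adj u v ↔
    (Metric.closedBall (c u) (r u) ∩ Metric.closedBall (c v) (r v)).Nonempty)

/-- Purely arithmetic core, asymmetric version (assuming `xv ≤ yv`). -/
lemma deltaDisk_key2 (xu yu ru xv yv rv : ℝ)
    (hxu : 0 < xu) (hyu : 0 < yu) (hxv : 0 < xv) (hyv : 0 < yv)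
    (h1 : xu ≤ ru) (h2 : yu ≤ ru) (h3 : xv ≤ rv) (h4 : yv ≤ rv)
    (h5 : ru^2 < xu^2+yu^2) (h6 : rv^2 < xv^2+yv^2)
    (h7 : xu^2+yu^2 < xv^2+yv^2)
    (h8 : (ru+rv)^2 < (xu-xv)^2+(yu-yv)^2)
    (hvv : xv ≤ yv) :
    max xu yu + ru ≤ xv := by
  have hxu' : xu < xv := by
    rcases le_or_gt yv yu with hy | hy
    · nlinarith
    · nlinarith [mul_pos hxu hxv, mul_pos hyu hyv]
  have hQ : 0 < xv^2 - 2*(xu+yu+ru)*xv + (xu^2+yu^2-ru^2) := by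
    nlinarith [mul_le_mul_of_nonneg_left hvv (by linarith : (0:ℝ) ≤ 2*(ru+yu))]
  have hs : xu + yu + ru ≤ xv := by
    by_contra hlt
    push_neg at hlt
    nlinarith [mul_pos (sub_pos.2 hxu') (show 0 < 2*(xu+yu+ru) - xv - xu by nlinarith)]
  rcases max_cases xu yu with ⟨hm, _⟩ | ⟨hm, _⟩ <;> rw [hm] <;> nlinarith

/-- Purely arithmetic core of the theorem. -/
lemma deltaDisk_key (xu yu ru xv yv rv : ℝ)
    (hxu : 0 < xu) (hyu : 0 < yu) (hxv : 0 < xv) (hyv : 0 < yv)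
    (h1 : xu ≤ ru) (h2 : yu ≤ ru) (h3 : xv ≤ rv) (h4 : yv ≤ rv)
    (h5 : ru^2 < xu^2+yu^2) (h6 : rv^2 < xv^2+yv^2)
    (h7 : xu^2+yu^2 < xv^2+yv^2)
    (h8 : (ru+rv)^2 < (xu-xv)^2+(yu-yv)^2) :
    max xu yu + ru ≤ min xv yv := by
  rcases le_total xv yv with hvv | hvv
  · rw [min_eq_left hvv]
    exact deltaDisk_key2 xu yu ru xv yv rv hxu hyu hxv hyv h1 h2 h3 h4 h5 h6 h7 h8 hvv
  · rw [min_eq_right hvv, max_comm]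
    exact deltaDisk_key2 yu xu ru yv xv rv hyu hxu hyv hxv h2 h1 h4 h3
      (by linarith) (by linarith) (by linarith) (by linarith) hvv

/-- If two closed balls (with appropriate radii) have centers at distance at
most the sum of the radii, they intersect. -/
lemma deltaDisk_balls_meet {E : Type*} [NormedAddCommGroup E] [NormedSpace ℝ E]
    (a b : E) (r1 r2 : ℝ) (h1 : 0 ≤ r1) (h2 : 0 ≤ r2) (hpos : 0 < r1 + r2)
    (h : dist a b ≤ r1 + r2) :
    (Metric.closedBall a r1 ∩ Metric.closedBall b r2).Nonempty := by
  have hba : ‖b - a‖ ≤ r1 + r2 := by rwa [← dist_eq_norm, dist_comm]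
  refine ⟨a + (r1/(r1+r2)) • (b - a), ?_, ?_⟩
  · simp only [Metric.mem_closedBall, dist_eq_norm, add_sub_cancel_left, norm_smul,
      Real.norm_eq_abs, abs_div, abs_of_nonneg h1, abs_of_pos hpos]
    rw [div_mul_eq_mul_div, div_le_iff₀ hpos]
    nlinarith [norm_nonneg (b - a)]
  · simp only [Metric.mem_closedBall, dist_eq_norm]
    have heq : a + (r1/(r1+r2)) • (b - a) - b = ((r1/(r1+r2)) - 1) • (b - a) := by
      rw [sub_smul, one_smul]; abel
    have h2' : r1/(r1+r2) - 1 = -(r2/(r1+r2)) := by field_simp; ring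
    rw [heq, norm_smul, Real.norm_eq_abs, h2', abs_neg,
      abs_of_nonneg (by positivity : (0:ℝ) ≤ r2/(r1+r2)), div_mul_eq_mul_div,
      div_le_iff₀ hpos]
    nlinarith [norm_nonneg (b - a)]

lemma deltaDisk_dist_sq (w z : EuclideanSpace ℝ (Fin 2)) :
    dist w z ^ 2 = (w 0 - z 0)^2 + (w 1 - z 1)^2 := by
  rw [EuclideanSpace.dist_eq, Real.sq_sqrt (by positivity)]
  simp [Fin.sum_univ_two, Real.dist_eq, sq_abs]

/-- In a Δ-disk representation, if `u` and `v` are distinct non-adjacent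
vertices with `d_u < d_v` (distance of the centers from the origin), then
`min (x_v, y_v) ≥ max (x_u, y_u) + r_u`. -/
theorem deltaDisk_nonedge_bound
    {V : Type*} (G : SimpleGraph V)
    (c : V → EuclideanSpace ℝ (Fin 2)) (r : V → ℝ)
    (h : IsDeltaDiskRep G c r)
    (u v : V) (huv : u ≠ v) (hna : ¬ G.Adj u v)
    (hd : dist (c u) 0 < dist (c v) 0) :
    max (c u 0) (c u 1) + r u ≤ min (c v 0) (c v 1) := by
  obtain ⟨hx0, hx1, hmax, hrd, hadj⟩ := h
  have hru0 : 0 < r u := lt_of_lt_of_le (hx0 u) (le_trans (le_max_left _ _) (hmax u))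
  have hrv0 : 0 < r v := lt_of_lt_of_le (hx0 v) (le_trans (le_max_left _ _) (hmax v))
  have hdu0 : (0 : ℝ) ≤ dist (c u) 0 := dist_nonneg
  have hd0 : ∀ w : V, dist (c w) 0 ^ 2 = (c w 0)^2 + (c w 1)^2 := by
    intro w
    have := deltaDisk_dist_sq (c w) 0
    simpa using this
  have h5 : (r u)^2 < (c u 0)^2 + (c u 1)^2 := by
    rw [← hd0 u]
    exact pow_lt_pow_left₀ (hrd u) hru0.le two_ne_zero
  have h6 : (r v)^2 < (c v 0)^2 + (c v 1)^2 := by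
    rw [← hd0 v]
    exact pow_lt_pow_left₀ (hrd v) hrv0.le two_ne_zero
  have h7 : (c u 0)^2 + (c u 1)^2 < (c v 0)^2 + (c v 1)^2 := by
    rw [← hd0 u, ← hd0 v]
    exact pow_lt_pow_left₀ hd hdu0 two_ne_zero
  have hdd : r u + r v < dist (c u) (c v) := by
    by_contra hle
    push_neg at hle
    exact hna ((hadj u v huv).mpr
      (deltaDisk_balls_meet _ _ _ _ hru0.le hrv0.le (by linarith) hle))
  have h8 : (r u + r v)^2 < (c u 0 - c v 0)^2 + (c u 1 - c v 1)^2 := by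
    rw [← deltaDisk_dist_sq]
    exact pow_lt_pow_left₀ hdd (by linarith) two_ne_zero
  exact deltaDisk_key (c u 0) (c u 1) (r u) (c v 0) (c v 1) (r v)
    (hx0 u) (hx1 u) (hx0 v) (hx1 v)
    (le_trans (le_max_left _ _) (hmax u)) (le_trans (le_max_right _ _) (hmax u))
    (le_trans (le_max_left _ _) (hmax v)) (le_trans (le_max_right _ _) (hmax v))
    h5 h6 h7 h8
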